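/- Let E₁ = [[i,0],[0,−i]], E₂ = [[0,−1],[1,0]], E₃ = [[0,i],[i,0]] ∈ su(2), which satisfy [E₂,E₃] = −2E₁, [E₃,E₁] = −2E₂, [E₁,E₂] = −2E₃. If Y₁, Y₂, Y₃ ∈ su(2) satisfy Y₁ ≠ 0 and the same relations [Y₂,Y₃] = −2Y₁, [Y₃,Y₁] = −2Y₂, [Y₁,Y₂] = −2Y₃, then there exists ρ in the special unitary group SU(2) (2×2 complex unitary matrices of determinant 1) such that Yᵢ = ρ Eᵢ ρ⁻¹ for i = 1, 2, 3. -/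

import Mathlib

/-!
Cayley–Hamilton for traceless `2 × 2` matrices gives `A² = -det A` and `AB + BA = tr (AB)`.
Since `tr (X [X, Y]) = 0`, the bracket relations force all mixed traces to vanish, so `Y₀, Y₁, Y₂`
pairwise anticommute, `Y₀ Y₁ = -Y₂` (and cyclically), and then `Y₀ (Y₀ Y₁) = (Y₀ Y₀) Y₁` gives
`det Y₀ = 1`, i.e. `Y₀² = -1`; likewise `Y₁² = -1`. A unit `i`-eigenvector `e` of `Y₀` and
`f = Y₁ e` (a `-i`-eigenvector, hence orthogonal to `e`) form a unitary frame that intertwines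
`Y₀, Y₁` with `E₀, E₁`; rescaling it by a root of its determinant lands in `SU(2)`, and `Y₂`
follows since `Y₂ = -Y₀ Y₁` and `E₂ = -E₀ E₁`.
-/

open Matrix Complex ComplexOrder

namespace Matrix

section Commutator

variable {n R : Type*} [Fintype n] [CommRing R]

theorem trace_mul_sub_mul_self (X Y : Matrix n n R) : trace (X * (X * Y - Y * X)) = 0 := by
  rw [mul_sub, trace_sub, sub_eq_zero, ← Matrix.mul_assoc, trace_mul_cycle, trace_mul_comm X,
    Matrix.mul_assoc]

def IsSu2Triple (A B C : Matrix n n R) : Prop :=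
  B * C - C * B = (-2 : R) • A ∧ C * A - A * C = (-2 : R) • B ∧ A * B - B * A = (-2 : R) • C

theorem IsSu2Triple.rotate {A B C : Matrix n n R} (h : IsSu2Triple A B C) :
    IsSu2Triple B C A :=
  ⟨h.2.1, h.2.2, h.1⟩

end Commutator

section TwoByTwo

variable {K : Type*} [Field K] {A B C : Matrix (Fin 2) (Fin 2) K}

theorem mul_self_eq_neg_det_smul_one (hA : A.trace = 0) : A * A = -A.det • 1 := by
  obtain hA : A 1 1 = -A 0 0 := by rw [trace_fin_two] at hA; linear_combination hA
  ext i j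
  fin_cases i <;> fin_cases j <;> simp [mul_apply, Fin.sum_univ_two, det_fin_two, hA] <;> ring

theorem mul_add_mul_eq_trace_smul_one (hA : A.trace = 0) (hB : B.trace = 0) :
    A * B + B * A = (A * B).trace • 1 := by
  obtain hA : A 1 1 = -A 0 0 := by rw [trace_fin_two] at hA; linear_combination hA
  obtain hB : B 1 1 = -B 0 0 := by rw [trace_fin_two] at hB; linear_combination hB
  ext i j
  fin_cases i <;> fin_cases j <;>
    simp [mul_apply, Fin.sum_univ_two, trace_fin_two, hA, hB] <;> ring

variable [NeZero (2 : K)]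

theorem IsSu2Triple.ne_zero_right (h : IsSu2Triple A B C) (hA : A ≠ 0) : B ≠ 0 := by
  rintro rfl
  simpa [hA, two_ne_zero] using h.1

theorem IsSu2Triple.mul_add_mul_eq_zero (h : IsSu2Triple A B C) (hA : A.trace = 0)
    (hB : B.trace = 0) : A * B + B * A = 0 := by
  have hBA : (B * A).trace = 0 := by
    simpa [h.1, two_ne_zero] using trace_mul_sub_mul_self B C
  rw [mul_add_mul_eq_trace_smul_one hA hB, trace_mul_comm, hBA, zero_smul]

theorem IsSu2Triple.mul_eq_neg (h : IsSu2Triple A B C) (hA : A.trace = 0) (hB : B.trace = 0) :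
    A * B = -C := by
  have : (2 : K) • (A * B) = (2 : K) • (-C) := by
    linear_combination (norm := module) h.mul_add_mul_eq_zero hA hB + h.2.2
  exact smul_right_injective _ two_ne_zero this

theorem IsSu2Triple.mul_self_eq_neg_one (h : IsSu2Triple A B C) (hA : A.trace = 0)
    (hB : B.trace = 0) (hC : C.trace = 0) (hB0 : B ≠ 0) : A * A = -1 := by
  have hAC : A * C = B := by
    linear_combination (norm := module) h.rotate.rotate.mul_eq_neg hC hA - h.2.1
  have hdet : (A.det - 1) • B = 0 := by
    have := congrArg (· * B) (mul_self_eq_neg_det_smul_one hA)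
    simp only [Matrix.mul_assoc, h.mul_eq_neg hA hB, mul_neg, hAC, neg_smul, neg_mul, smul_mul,
      Matrix.one_mul] at this
    linear_combination (norm := module) this
  rw [mul_self_eq_neg_det_smul_one hA, sub_eq_zero.1 ((smul_eq_zero.1 hdet).resolve_right hB0),
    neg_smul, one_smul]

end TwoByTwo

section Frames

variable {n m α : Type*} [Fintype n]

theorem conjTranspose_mul_self_transpose_of [NonUnitalSemiring α] [StarRing α] (w : m → n → α) :
    (of w)ᵀᴴ * (of w)ᵀ = of fun i j => star (w i) ⬝ᵥ w j :=
  rfl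

theorem mul_transpose_of [NonUnitalSemiring α] (A : Matrix n n α) (w : m → n → α) :
    A * (of w)ᵀ = (of fun j => A *ᵥ w j)ᵀ :=
  rfl

theorem exists_mulVec_eq_smul_of_mul_eq_zero [DecidableEq n] {R : Type*} [CommRing R]
    {A : Matrix n n R} {a b : R} (h : (A - a • 1) * (A - b • 1) = 0) (hb : A ≠ b • 1) :
    ∃ u ≠ 0, A *ᵥ u = a • u := by
  obtain ⟨w, hw⟩ : ∃ w, (A - b • 1) *ᵥ w ≠ 0 := by
    by_contra! hw
    exact hb (sub_eq_zero.1 (mulVec_injective (funext fun w => by simpa using hw w)))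
  refine ⟨_, hw, sub_eq_zero.1 ?_⟩
  simpa [← mulVec_mulVec, sub_mulVec, smul_mulVec] using congrArg (· *ᵥ w) h

theorem exists_smul_dotProduct_star_self_eq_one {u : n → ℂ} (hu : u ≠ 0) :
    ∃ c : ℂ, star (c • u) ⬝ᵥ (c • u) = 1 := by
  obtain ⟨r, hr, hru⟩ := RCLike.pos_iff_exists_ofReal.1 (dotProduct_star_self_pos_iff.2 hu)
  have hs : (√r : ℂ) ≠ 0 := by exact_mod_cast (Real.sqrt_pos.2 hr).ne'
  refine ⟨(√r)⁻¹, ?_⟩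
  rw [star_smul, smul_dotProduct, dotProduct_smul, ← hru]
  simp only [star_inv₀, RCLike.star_def, conj_ofReal, coe_algebraMap, smul_eq_mul]
  field_simp
  exact_mod_cast (Real.sq_sqrt hr.le).symm

theorem star_dotProduct_eq_zero_of_mulVec_eq_smul {K : Type*} [Field K] [StarRing K]
    {A : Matrix n n K} (hA : Aᴴ = -A) {u v : n → K} {a b : K} (hu : A *ᵥ u = a • u)
    (hv : A *ᵥ v = b • v) (hab : star a + b ≠ 0) : star u ⬝ᵥ v = 0 := by
  have huA : star u ᵥ* A = -star a • star u := by
    rw [← conjTranspose_conjTranspose A, ← star_mulVec, hA, neg_mulVec, hu, star_neg, star_smul,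
      neg_smul]
  have := dotProduct_mulVec (star u) A v
  rw [hv, huA, dotProduct_smul, smul_dotProduct, smul_eq_mul, smul_eq_mul, neg_mul,
    eq_neg_iff_add_eq_zero, ← add_mul, add_comm] at this
  exact (mul_eq_zero.1 this).resolve_left hab

theorem exists_smul_mem_specialUnitaryGroup [DecidableEq n] [Nonempty n] {ρ : Matrix n n ℂ}
    (hρ : ρ ∈ unitaryGroup n ℂ) : ∃ c : ℂ, c • ρ ∈ specialUnitaryGroup n ℂ := by
  have hdet := det_of_mem_unitary hρ
  obtain ⟨c, hc⟩ := IsAlgClosed.exists_pow_nat_eq (star ρ.det) (Fintype.card_pos (α := n))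
  have hc1 : ‖c‖ = 1 := by
    rw [← pow_left_inj₀ (norm_nonneg c) zero_le_one (Fintype.card_ne_zero (α := n)), ← norm_pow,
      hc, norm_star, CStarRing.norm_of_mem_unitary hdet, one_pow]
  refine ⟨c, mem_specialUnitaryGroup_iff.2 ⟨?_, ?_⟩⟩
  · rw [mem_unitaryGroup_iff', star_smul, smul_mul_smul_comm, (mem_unitaryGroup_iff').1 hρ]
    simp [conj_mul', hc1]
  · rw [det_smul, hc]
    exact hdet.1

theorem exists_mem_unitaryGroup_intertwining {A B : Matrix (Fin 2) (Fin 2) ℂ} (hAH : Aᴴ = -A)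
    (hBH : Bᴴ = -B) (hA : A.trace = 0) (hA2 : A * A = -1) (hB2 : B * B = -1)
    (hAB : A * B + B * A = 0) :
    ∃ ρ ∈ unitaryGroup (Fin 2) ℂ, A * ρ = ρ * !![I, 0; 0, -I] ∧ B * ρ = ρ * !![0, -1; 1, 0] := by
  obtain ⟨u, hu0, hAu⟩ : ∃ u ≠ 0, A *ᵥ u = I • u := by
    refine exists_mulVec_eq_smul_of_mul_eq_zero (b := -I) ?_ fun h => ?_
    · simp only [sub_mul, mul_sub, hA2, smul_mul, Matrix.mul_smul, Matrix.one_mul, Matrix.mul_one,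
        smul_smul]
      linear_combination (norm := module) -I_sq • (1 : Matrix (Fin 2) (Fin 2) ℂ)
    · simp [h, I_ne_zero] at hA
  obtain ⟨c, hc⟩ := exists_smul_dotProduct_star_self_eq_one hu0
  set e := c • u
  have hAe : A *ᵥ e = I • e := by rw [mulVec_smul, hAu, smul_comm]
  set f := B *ᵥ e
  have hAf : A *ᵥ f = -I • f := by
    rw [mulVec_mulVec, eq_neg_of_add_eq_zero_left hAB, neg_mulVec, ← mulVec_mulVec, hAe,
      mulVec_smul, neg_smul]
  have hBf : B *ᵥ f = -e := by rw [mulVec_mulVec, hB2, neg_mulVec, one_mulVec]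
  have hff : star f ⬝ᵥ f = 1 := by
    rw [star_mulVec, ← dotProduct_mulVec, mulVec_mulVec, hBH, neg_mul, hB2, neg_neg, one_mulVec,
      hc]
  have hef : star e ⬝ᵥ f = 0 :=
    star_dotProduct_eq_zero_of_mulVec_eq_smul hAH hAe hAf (by simp [I_ne_zero])
  refine ⟨(of ![e, f])ᵀ, ?_, ?_, ?_⟩
  · rw [mem_unitaryGroup_iff', star_eq_conjTranspose, conjTranspose_mul_self_transpose_of,
      eta_fin_two (of _), one_fin_two]
    simp only [of_apply, cons_val_zero, cons_val_one, hc, hff, hef, star_dotProduct f e, star_zero]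
  · rw [mul_transpose_of]
    ext i j
    fin_cases j <;> simp only [transpose_apply, of_apply, Fin.zero_eta, Fin.mk_one, cons_val_zero,
      cons_val_one, hAe, hAf] <;> simp [mul_apply, Fin.sum_univ_two, mul_comm]
  · rw [mul_transpose_of]
    ext i j
    fin_cases j <;> simp only [transpose_apply, of_apply, Fin.zero_eta, Fin.mk_one, cons_val_zero,
      cons_val_one, hBf] <;> simp [mul_apply, Fin.sum_univ_two, f]

end Frames

end Matrix

theorem su2_frame_conjugate
    (E Y : Fin 3 → Matrix (Fin 2) (Fin 2) ℂ)
    (hE0 : E 0 = !![Complex.I, 0; 0, -Complex.I])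
    (hE1 : E 1 = !![0, -1; 1, 0])
    (hE2 : E 2 = !![0, Complex.I; Complex.I, 0])
    (hYmem : ∀ i, (Y i)ᴴ = -Y i ∧ (Y i).trace = 0)
    (hY0 : Y 0 ≠ 0)
    (h₁ : Y 1 * Y 2 - Y 2 * Y 1 = (-2 : ℂ) • Y 0)
    (h₂ : Y 2 * Y 0 - Y 0 * Y 2 = (-2 : ℂ) • Y 1)
    (h₃ : Y 0 * Y 1 - Y 1 * Y 0 = (-2 : ℂ) • Y 2) :
    ∃ ρ : Matrix (Fin 2) (Fin 2) ℂ, ρᴴ * ρ = 1 ∧ ρ.det = 1 ∧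
      ∀ i, Y i = ρ * E i * ρ⁻¹ := by
  have hY : IsSu2Triple (Y 0) (Y 1) (Y 2) := ⟨h₁, h₂, h₃⟩
  have htr i := (hYmem i).2
  have hY1 := hY.ne_zero_right hY0
  obtain ⟨ρ₀, hρ₀, hY0ρ₀, hY1ρ₀⟩ := exists_mem_unitaryGroup_intertwining (hYmem 0).1 (hYmem 1).1
    (htr 0) (hY.mul_self_eq_neg_one (htr 0) (htr 1) (htr 2) hY1)
    (hY.rotate.mul_self_eq_neg_one (htr 1) (htr 2) (htr 0) (hY.rotate.ne_zero_right hY1))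
    (hY.mul_add_mul_eq_zero (htr 0) (htr 1))
  rw [← hE0] at hY0ρ₀
  rw [← hE1] at hY1ρ₀
  have hY2ρ₀ : Y 2 * ρ₀ = ρ₀ * E 2 := by
    have hE : E 2 = -(E 0 * E 1) := by
      rw [hE0, hE1, hE2]; ext i j; fin_cases i <;> fin_cases j <;> simp
    rw [← neg_neg (Y 2), ← hY.mul_eq_neg (htr 0) (htr 1), hE, neg_mul, mul_neg, Matrix.mul_assoc,
      hY1ρ₀, ← Matrix.mul_assoc, hY0ρ₀, Matrix.mul_assoc]
  obtain ⟨c, hc⟩ := exists_smul_mem_specialUnitaryGroup hρ₀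
  obtain ⟨hcU, hcdet⟩ := mem_specialUnitaryGroup_iff.1 hc
  have hconj {X F : Matrix (Fin 2) (Fin 2) ℂ} (h : X * ρ₀ = ρ₀ * F) :
      X = c • ρ₀ * F * (c • ρ₀)⁻¹ := by
    rw [Matrix.smul_mul, ← h, ← Matrix.mul_smul,
      mul_nonsing_inv_cancel_right _ _ (hcdet ▸ isUnit_one)]
  refine ⟨c • ρ₀, (mem_unitaryGroup_iff').1 hcU, hcdet, fun i => ?_⟩
  fin_cases i
  exacts [hconj hY0ρ₀, hconj hY1ρ₀, hconj hY2ρ₀]
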